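/- Let n>2 be an integer and g a nonnegative integer with gcd(n,g)=1. Set f_n = F_1 − F_n + Σ_{i=1}^{n−2} F_i·(F_n/(F_1 − F_{n+1}))^{n−(i+1)}, and assume f_n ≠ 0. Then the inverse of C_{n,g}(F) equals (1/f_n)·C·Q_gᵀ, where C is the circulant matrix with first row (c_0,…,c_{n−1}) given by c_0 = 1 + Σ_{i=1}^{n−2} F_{n−i}F_n^{i−1}/(F_1 − F_{n+1})^i, c_1 = −1 + Σ_{i=1}^{n−2} F_{n−1−i}F_n^{i−1}/(F_1 − F_{n+1})^i, and c_j = −F_n^{j−2}/(F_1 − F_{n+1})^{j−1} for 2 ≤ j ≤ n−1. -/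

import Mathlib

open Matrix

/-- The `g`-circulant matrix of size `n` with first row `(a 0, a 1, …, a (n-1))`:
its `(i,j)` entry (0-indexed) equals `a ((j - i*g) mod n)`. -/
def gCirc {α : Type*} (n g : ℕ) (a : ℕ → α) : Matrix (Fin n) (Fin n) α :=
  Matrix.of fun i j => a ((j.val + (n - (i.val * g) % n)) % n)

/-- `Q_g`: the `g`-circulant matrix with first row `(1,0,…,0)`. -/
def Qg (n g : ℕ) : Matrix (Fin n) (Fin n) ℝ :=
  gCirc n g (fun m => if m = 0 then (1 : ℝ) else 0)

/-- `circ c`: the circulant (`1`-circulant) matrix with first row `(c 0, …, c (n-1))`. -/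
def circ (n : ℕ) (c : ℕ → ℝ) : Matrix (Fin n) (Fin n) ℝ :=
  gCirc n 1 c

/-!
A `g`-circulant matrix factors as `Q_g * circ a`, and `Q_g` is a permutation matrix when
`gcd(n, g) = 1`, so `Q_g * Q_gᵀ = 1`. Circulant matrices commute and multiply by cyclic
convolution of their first rows, so it remains to check that the cyclic convolution of
`(F_1, …, F_n)` with `c` is `f_n` at `0` and vanishes elsewhere. With `n = K + 2` and
`w_t = -c_{t+2}`, the addition formula `F_{a+b+1} = F_a F_b + F_{a+1} F_{b+1}` turns
`c_0 F_{M+2} + c_1 F_{M+1}` into `F_M + ∑ w_t F_{M+n-t}`, and the terms that wrap around the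
cycle telescope because `(1 - F_{n+1}) w_{t+1} = F_n w_t`.
-/

open Finset

section CirculantAlgebra

open Fin.NatCast

variable {n : ℕ} [NeZero n]

lemma gCirc_apply {α : Type*} (g : ℕ) (a : ℕ → α) (i j : Fin n) :
    gCirc n g a i j = a (j - i * (g : Fin n) : Fin n) := by
  simp only [gCirc, of_apply, Fin.val_sub, Fin.val_mul, Fin.val_natCast, Nat.mul_mod_mod,
    add_comm]

lemma circ_eq_transpose_circulant (a : ℕ → ℝ) :
    circ n a = (circulant fun k : Fin n => a k)ᵀ := by
  ext i j
  simp [circ, gCirc_apply]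

lemma circ_mul_circ_eq_smul_one {a b : ℕ → ℝ} {s : ℝ}
    (h : ∀ m : Fin n, ∑ j : Fin n, a (m - j : Fin n) * b j = if m = 0 then s else 0) :
    circ n a * circ n b = s • 1 := by
  have hv : (circulant fun k : Fin n => a k) *ᵥ (fun k => b k) = Pi.single 0 s := by
    ext m
    simpa [mulVec, dotProduct, Pi.single_apply] using h m
  rw [circ_eq_transpose_circulant, circ_eq_transpose_circulant, ← transpose_mul,
    circulant_mul_comm, circulant_mul, hv, circulant_single]
  ext i j
  simp [one_apply, diagonal_apply, eq_comm]

lemma Qg_apply (g : ℕ) (i j : Fin n) : Qg n g i j = if j = i * (g : Fin n) then 1 else 0 := by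
  simp [Qg, gCirc_apply, Fin.val_eq_zero_iff, sub_eq_zero]

lemma gCirc_eq_Qg_mul_circ (g : ℕ) (a : ℕ → ℝ) : gCirc n g a = Qg n g * circ n a := by
  ext i j
  simp [mul_apply, Qg_apply, circ, gCirc_apply]

lemma Fin.mul_natCast_injective_of_coprime {g : ℕ} (hg : Nat.gcd n g = 1) :
    Function.Injective fun i : Fin n => i * (g : Fin n) := by
  intro i j hij
  have hmod : i.val * g ≡ j.val * g [MOD n] := by
    simpa [Nat.ModEq, Fin.ext_iff, Fin.val_mul, Fin.val_natCast, Nat.mul_mod_mod] using hij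
  exact Fin.ext ((hmod.cancel_right_of_coprime hg).eq_of_lt_of_lt i.isLt j.isLt)

lemma Qg_mul_transpose_Qg {g : ℕ} (hg : Nat.gcd n g = 1) : Qg n g * (Qg n g)ᵀ = 1 := by
  ext i j
  simp [mul_apply, Qg_apply, one_apply, (Fin.mul_natCast_injective_of_coprime hg).eq_iff, eq_comm]

end CirculantAlgebra

open Nat (fib)

section FibonacciConvolution

/-- The size of the matrix is `n = K + 2`; the paper's `c_{t+2}` is `-fibCircWeight K t`. -/
noncomputable def fibCircWeight (K t : ℕ) : ℝ :=
  (fib (K + 2) : ℝ) ^ t / (1 - fib (K + 3)) ^ (t + 1)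

structure FibCircInvRow (K : ℕ) (c : ℕ → ℝ) : Prop where
  zero : c 0 = 1 + ∑ t ∈ range K, (fib (K + 1 - t) : ℝ) * fibCircWeight K t
  one : c 1 = -1 + ∑ t ∈ range K, (fib (K - t) : ℝ) * fibCircWeight K t
  add_two : ∀ t < K, c (t + 2) = -fibCircWeight K t

lemma one_sub_fib_ne_zero (K : ℕ) : (1 : ℝ) - fib (K + 3) ≠ 0 := by
  have h : 2 ≤ fib (K + 3) := Nat.fib_mono (show 3 ≤ K + 3 by omega)
  have h' : (2 : ℝ) ≤ fib (K + 3) := by exact_mod_cast h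
  linarith

lemma fib_mul_add_fib_mul {K t : ℕ} (M : ℕ) (ht : t < K) :
    (fib (K + 1 - t) * fib (M + 2) + fib (K - t) * fib (M + 1) : ℝ) = fib (M + K + 2 - t) := by
  have h := Nat.fib_add (K - t) (M + 1)
  rw [show K - t + (M + 1) + 1 = M + K + 2 - t by omega, show K - t + 1 = K + 1 - t by omega] at h
  rw [h]
  push_cast
  ring

lemma sum_fibCircWeight_mul_fib_sub (K M : ℕ) :
    ∑ t ∈ range M, fibCircWeight K t * (fib (M + K + 2 - t) - fib (M - t) : ℝ) = -fib M := by
  have hB := one_sub_fib_ne_zero K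
  let u : ℕ → ℝ := fun t => fib (M - t) * (fib (K + 2) / (1 - fib (K + 3))) ^ t
  have hstep : ∀ t ∈ range M,
      fibCircWeight K t * (fib (M + K + 2 - t) - fib (M - t) : ℝ) = u (t + 1) - u t := by
    intro t ht
    obtain ⟨a, ha⟩ : ∃ a, M - t = a + 1 := ⟨M - t - 1, by rw [mem_range] at ht; omega⟩
    have hfib := Nat.fib_add a (K + 2)
    rw [show a + (K + 2) + 1 = M + K + 2 - t by omega, show K + 2 + 1 = K + 3 by rfl] at hfib
    simp only [u, fibCircWeight, hfib, ha, show M - (t + 1) = a by omega, div_pow]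
    field_simp
    push_cast
    ring
  rw [sum_congr rfl hstep, sum_range_sub]
  simp [u]

lemma sum_fibCircWeight_mul_fib_wrap {K M : ℕ} (hM : M ≤ K) :
    ∑ t ∈ range K, fibCircWeight K t * fib ((K - t + (M + 1)) % (K + 2) + 1)
      = ∑ t ∈ range K, fibCircWeight K t * fib (M + K + 2 - t) + fib M := by
  have hlow : ∀ t ∈ range M, fibCircWeight K t * fib ((K - t + (M + 1)) % (K + 2) + 1)
      = fibCircWeight K t * fib (M - t) := by
    intro t ht
    rw [mem_range] at ht
    rw [show K - t + (M + 1) = M - t - 1 + (K + 2) by omega, Nat.add_mod_right,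
      Nat.mod_eq_of_lt (by omega), show M - t - 1 + 1 = M - t by omega]
  have hhigh : ∀ t ∈ Ico M K, fibCircWeight K t * fib ((K - t + (M + 1)) % (K + 2) + 1)
      = fibCircWeight K t * fib (M + K + 2 - t) := by
    intro t ht
    rw [mem_Ico] at ht
    rw [Nat.mod_eq_of_lt (by omega), show K - t + (M + 1) + 1 = M + K + 2 - t by omega]
  have htel := sum_fibCircWeight_mul_fib_sub K M
  rw [← sum_range_add_sum_Ico _ hM, ← sum_range_add_sum_Ico _ hM, sum_congr rfl hlow,
    sum_congr rfl hhigh]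
  simp only [mul_sub, sum_sub_distrib] at htel
  linarith

namespace FibCircInvRow

variable {K : ℕ} {c : ℕ → ℝ}

lemma sum_fib_mul_zero (hc : FibCircInvRow K c) :
    ∑ j ∈ range (K + 2), (fib ((K + 2 - j) % (K + 2) + 1) : ℝ) * c j
      = 1 - fib (K + 2) + fib (K + 2) * ∑ t ∈ range K, fib (K - t) * fibCircWeight K t := by
  have hmid : ∀ t ∈ range K, (fib ((K + 2 - (t + 2)) % (K + 2) + 1) : ℝ) * c (t + 2)
      = -(fib (K + 1 - t) * fibCircWeight K t) := by
    intro t ht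
    rw [mem_range] at ht
    rw [hc.add_two t ht, Nat.mod_eq_of_lt (by omega), show K + 2 - (t + 2) + 1 = K + 1 - t by omega]
    ring
  rw [sum_range_succ', sum_range_succ', sum_congr rfl hmid, sum_neg_distrib, hc.zero, hc.one]
  simp only [zero_add, Nat.add_one_sub_one, Nat.mod_succ, tsub_zero, Nat.mod_self, Nat.fib_one,
    Nat.cast_one, one_mul]
  ring

lemma sum_fib_mul_succ (hc : FibCircInvRow K c) {M : ℕ} (hM : M ≤ K) :
    ∑ j ∈ range (K + 2), (fib ((K + 2 - j + (M + 1)) % (K + 2) + 1) : ℝ) * c j = 0 := by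
  have hmid : ∀ t ∈ range K, (fib ((K + 2 - (t + 2) + (M + 1)) % (K + 2) + 1) : ℝ) * c (t + 2)
      = -(fibCircWeight K t * fib ((K - t + (M + 1)) % (K + 2) + 1)) := by
    intro t ht
    rw [mem_range] at ht
    rw [hc.add_two t ht, Nat.add_sub_add_right]
    ring
  have hsum : ∑ t ∈ range K, fibCircWeight K t * fib (M + K + 2 - t)
      = fib (M + 2) * ∑ t ∈ range K, (fib (K + 1 - t) : ℝ) * fibCircWeight K t
        + fib (M + 1) * ∑ t ∈ range K, (fib (K - t) : ℝ) * fibCircWeight K t := by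
    rw [mul_sum, mul_sum, ← sum_add_distrib]
    refine sum_congr rfl fun t ht => ?_
    rw [← fib_mul_add_fib_mul M (mem_range.mp ht)]
    ring
  have hfirst : (fib ((K + 2 - 0 + (M + 1)) % (K + 2) + 1) * c 0
      + fib ((K + 2 - 1 + (M + 1)) % (K + 2) + 1) * c 1 : ℝ)
      = fib M + ∑ t ∈ range K, fibCircWeight K t * fib (M + K + 2 - t) := by
    rw [show K + 2 - 0 + (M + 1) = M + 1 + (K + 2) by omega,
      show K + 2 - 1 + (M + 1) = M + (K + 2) by omega, Nat.add_mod_right, Nat.add_mod_right,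
      Nat.mod_eq_of_lt (by omega), Nat.mod_eq_of_lt (by omega), hc.zero, hc.one, hsum,
      Nat.fib_add_two]
    push_cast
    ring
  rw [sum_range_succ', sum_range_succ', sum_congr rfl hmid, sum_neg_distrib,
    sum_fibCircWeight_mul_fib_wrap hM]
  linarith

lemma circ_fib_mul_circ (hc : FibCircInvRow K c) :
    circ (K + 2) (fun m => (fib (m + 1) : ℝ)) * circ (K + 2) c
      = (1 - fib (K + 2) + fib (K + 2) * ∑ t ∈ range K, fib (K - t) * fibCircWeight K t : ℝ)
        • 1 := by
  refine circ_mul_circ_eq_smul_one fun m => ?_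
  simp only [Fin.val_sub]
  rw [Fin.sum_univ_eq_sum_range (fun j => (fib ((K + 2 - j + m) % (K + 2) + 1) : ℝ) * c j)]
  obtain ⟨_ | M, hm⟩ := m
  · simpa using hc.sum_fib_mul_zero
  · rw [if_neg (by simp [Fin.ext_iff])]
    exact hc.sum_fib_mul_succ (by omega)

end FibCircInvRow

lemma sum_Icc_one_eq_sum_range (f : ℕ → ℝ) (K : ℕ) :
    ∑ i ∈ Icc 1 K, f i = ∑ t ∈ range K, f (t + 1) := by
  rw [← Ico_add_one_right_eq_Icc, sum_Ico_eq_sum_range]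
  simp [add_comm]

lemma sum_Icc_mul_fibCircWeight (K : ℕ) (x : ℕ → ℝ) :
    ∑ i ∈ Icc 1 K, x i * (fib (K + 2) : ℝ) ^ (i - 1) / (1 - fib (K + 2 + 1)) ^ i
      = ∑ t ∈ range K, x (t + 1) * fibCircWeight K t := by
  rw [sum_Icc_one_eq_sum_range]
  refine sum_congr rfl fun t _ => ?_
  simp [fibCircWeight, mul_div_assoc]

lemma sum_Icc_fib_mul_pow (K : ℕ) :
    ∑ i ∈ Icc 1 K, (fib i : ℝ) * (fib (K + 2) / (1 - fib (K + 2 + 1))) ^ (K + 2 - (i + 1))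
      = fib (K + 2) * ∑ t ∈ range K, fib (K - t) * fibCircWeight K t := by
  rw [sum_Icc_one_eq_sum_range, ← sum_range_reflect, mul_sum]
  refine sum_congr rfl fun t ht => ?_
  rw [mem_range] at ht
  rw [show K - 1 - t + 1 = K - t by omega, show K + 2 - (K - t + 1) = t + 1 by omega]
  simp only [fibCircWeight, div_pow]
  ring

end FibonacciConvolution

/-- The inverse of the g-circulant matrix of Fibonacci numbers. -/
theorem inv_gCirc_fib
    (n r : ℕ) (hn : 2 < n) (hgcd : Nat.gcd n r = 1)
    (fn : ℝ)
    (hfn : fn = (Nat.fib 1 : ℝ) - (Nat.fib n : ℝ) +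
        ∑ i ∈ Finset.Icc 1 (n - 2),
          (Nat.fib i : ℝ) *
            ((Nat.fib n : ℝ) / ((Nat.fib 1 : ℝ) - (Nat.fib (n + 1) : ℝ))) ^ (n - (i + 1)))
    (hfnne : fn ≠ 0)
    (c : ℕ → ℝ)
    (hc0 : c 0 = 1 + ∑ i ∈ Finset.Icc 1 (n - 2),
        (Nat.fib (n - i) : ℝ) * (Nat.fib n : ℝ) ^ (i - 1) /
          ((Nat.fib 1 : ℝ) - (Nat.fib (n + 1) : ℝ)) ^ i)
    (hc1 : c 1 = -1 + ∑ i ∈ Finset.Icc 1 (n - 2),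
        (Nat.fib (n - 1 - i) : ℝ) * (Nat.fib n : ℝ) ^ (i - 1) /
          ((Nat.fib 1 : ℝ) - (Nat.fib (n + 1) : ℝ)) ^ i)
    (hcj : ∀ j : ℕ, 2 ≤ j → j ≤ n - 1 →
        c j = -((Nat.fib n : ℝ) ^ (j - 2) /
          ((Nat.fib 1 : ℝ) - (Nat.fib (n + 1) : ℝ)) ^ (j - 1))) :
    (gCirc n r (fun m => (Nat.fib (m + 1) : ℝ)))⁻¹ =
      (1 / fn) • (circ n c * (Qg n r)ᵀ) := by
  obtain ⟨K, rfl⟩ : ∃ K, n = K + 2 := ⟨n - 2, by omega⟩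
  simp only [Nat.add_sub_cancel, Nat.fib_one, Nat.cast_one] at hfn hc0 hc1 hcj
  rw [sum_Icc_fib_mul_pow] at hfn
  have hc : FibCircInvRow K c := by
    refine ⟨?_, ?_, fun t ht => ?_⟩
    · rw [hc0, sum_Icc_mul_fibCircWeight]
      exact congrArg _ (sum_congr rfl fun t _ => by rw [show K + 2 - (t + 1) = K + 1 - t by omega])
    · rw [hc1, sum_Icc_mul_fibCircWeight]
      exact congrArg _ (sum_congr rfl fun t _ => by rw [show K + 2 - 1 - (t + 1) = K - t by omega])
    · simp [hcj (t + 2) (by omega) (by omega), fibCircWeight]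
  apply inv_eq_right_inv
  rw [gCirc_eq_Qg_mul_circ, Matrix.mul_smul, Matrix.mul_assoc, ← Matrix.mul_assoc (circ _ _),
    hc.circ_fib_mul_circ, ← hfn, Matrix.smul_mul, Matrix.one_mul, Matrix.mul_smul,
    Qg_mul_transpose_Qg hgcd, smul_smul, one_div, inv_mul_cancel₀ hfnne, one_smul]
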